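/- Let G be a graph whose complement contains an induced matching with ℓ ≥ 1 edges. Then bp(G) ≤ n - ℓ - 1, where n is the number of vertices of G. -/

import Mathlib

open Finset

/-- The finset of edges (as elements of `Sym2 V`) of the complete bipartite graph with
parts `A` and `B`. -/
def bicliqueEdges {V : Type*} [DecidableEq V] (A B : Finset V) : Finset (Sym2 V) :=
  (A ×ˢ B).image fun p => s(p.1, p.2)

/-- `P` is a partition of the edge set of `G` into pairwise edge-disjoint nonempty complete
bipartite subgraphs. -/
def IsBicliquePartition {V : Type*} [Fintype V] [DecidableEq V] (G : SimpleGraph V)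
    [DecidableRel G.Adj] (P : Finset (Finset V × Finset V)) : Prop :=
  (∀ c ∈ P, c.1.Nonempty ∧ c.2.Nonempty ∧ Disjoint c.1 c.2 ∧
      ∀ a ∈ c.1, ∀ b ∈ c.2, G.Adj a b) ∧
  ((P : Set (Finset V × Finset V)).Pairwise fun c d =>
      Disjoint (bicliqueEdges c.1 c.2) (bicliqueEdges d.1 d.2)) ∧
  P.sup (fun c => bicliqueEdges c.1 c.2) = G.edgeFinset

/-- The biclique partition number. -/
noncomputable def bp {V : Type*} [Fintype V] [DecidableEq V] (G : SimpleGraph V)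
    [DecidableRel G.Adj] : ℕ :=
  sInf {m | ∃ P : Finset (Finset V × Finset V), IsBicliquePartition G P ∧ P.card = m}

/-- The complement of `G` contains an induced matching with `l` edges: there are `2l`
vertices `S` and `l` pairwise vertex-disjoint edges `M` of the complement, all inside `S`,
such that the non-edges of `G` inside `S` are exactly the edges of `M`. -/
def ComplementHasInducedMatching {V : Type*} [DecidableEq V] (G : SimpleGraph V)
    (l : ℕ) : Prop :=
  ∃ (S : Finset V) (M : Finset (Sym2 V)),
    S.card = 2 * l ∧ M.card = l ∧
    (∀ e ∈ M, ∀ v ∈ e, v ∈ S) ∧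
    (∀ e ∈ M, ∀ e' ∈ M, e ≠ e' → ∀ v ∈ e, v ∉ e') ∧
    (∀ u ∈ S, ∀ v ∈ S, (u ≠ v ∧ ¬ G.Adj u v) ↔ s(u, v) ∈ M)

/-!
The `2ℓ` matched vertices `S` induce in `G` the complete multipartite graph whose parts are the
`ℓ` matching edges. Ordering the parts, its edges are partitioned by the `ℓ - 1` bicliques
"part `i` versus all later parts". The `n - 2ℓ` vertices outside `S` are then added back one at
a time, each contributing its star, for `n - ℓ - 1` bicliques in total.
-/

section

variable {V : Type*} [DecidableEq V]

lemma mem_bicliqueEdges {A B : Finset V} {e : Sym2 V} :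
    e ∈ bicliqueEdges A B ↔ ∃ a ∈ A, ∃ b ∈ B, e = s(a, b) := by
  simp only [bicliqueEdges, mem_image, mem_product, Prod.exists]
  constructor
  · rintro ⟨a, b, ⟨ha, hb⟩, rfl⟩
    exact ⟨a, ha, b, hb, rfl⟩
  · rintro ⟨a, ha, b, hb, rfl⟩
    exact ⟨a, b, ⟨ha, hb⟩, rfl⟩

lemma bicliqueEdges_singleton_neighborFinset [Fintype V] (G : SimpleGraph V)
    [DecidableRel G.Adj] (v : V) :
    bicliqueEdges {v} (G.neighborFinset v) = G.incidenceFinset v := by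
  ext e
  induction e using Sym2.ind with
  | _ x y =>
    simp only [mem_bicliqueEdges, mem_singleton, SimpleGraph.mem_neighborFinset,
      SimpleGraph.mem_incidenceFinset, SimpleGraph.mk'_mem_incidenceSet_iff, exists_eq_left,
      Sym2.eq_iff]
    constructor
    · rintro ⟨b, hb, ⟨rfl, rfl⟩ | ⟨rfl, rfl⟩⟩
      · exact ⟨hb, .inl rfl⟩
      · exact ⟨hb.symm, .inr rfl⟩
    · rintro ⟨hxy, rfl | rfl⟩
      · exact ⟨y, hxy, .inl ⟨rfl, rfl⟩⟩
      · exact ⟨x, hxy.symm, .inr ⟨rfl, rfl⟩⟩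

section BicliquePartition

variable [Fintype V] {G H : SimpleGraph V} [DecidableRel G.Adj] [DecidableRel H.Adj]
  {P Q : Finset (Finset V × Finset V)}

/-- The disjointness of the two sides and their complete adjacency follow from the covering
condition. -/
lemma isBicliquePartition_iff :
    IsBicliquePartition G P ↔ (∀ c ∈ P, c.1.Nonempty ∧ c.2.Nonempty) ∧
      ((P : Set (Finset V × Finset V)).Pairwise fun c d =>
        Disjoint (bicliqueEdges c.1 c.2) (bicliqueEdges d.1 d.2)) ∧
      P.sup (fun c => bicliqueEdges c.1 c.2) = G.edgeFinset := by
  refine ⟨fun ⟨h₁, h₂, h₃⟩ => ⟨fun c hc => ⟨(h₁ c hc).1, (h₁ c hc).2.1⟩, h₂, h₃⟩, ?_⟩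
  rintro ⟨h₁, h₂, h₃⟩
  have hadj : ∀ c ∈ P, ∀ a ∈ c.1, ∀ b ∈ c.2, G.Adj a b := fun c hc a ha b hb => by
    rw [← SimpleGraph.mem_edgeSet, ← SimpleGraph.mem_edgeFinset, ← h₃]
    exact mem_sup.2 ⟨c, hc, mem_bicliqueEdges.2 ⟨a, ha, b, hb, rfl⟩⟩
  refine ⟨fun c hc => ⟨(h₁ c hc).1, (h₁ c hc).2, ?_, hadj c hc⟩, h₂, h₃⟩
  exact disjoint_left.2 fun a ha hb => G.loopless.irrefl a (hadj c hc a ha a hb)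

lemma IsBicliquePartition.bp_le_card (hP : IsBicliquePartition G P) : bp G ≤ #P :=
  Nat.sInf_le ⟨P, hP, rfl⟩

lemma IsBicliquePartition.of_edgeFinset_eq (hQ : IsBicliquePartition H Q)
    (hHG : H.edgeFinset = G.edgeFinset) : IsBicliquePartition G Q := by
  rw [isBicliquePartition_iff, ← hHG]
  exact isBicliquePartition_iff.1 hQ

lemma IsBicliquePartition.insert (hQ : IsBicliquePartition H Q) {A B : Finset V}
    (hA : A.Nonempty) (hB : B.Nonempty) (hdisj : Disjoint H.edgeFinset (bicliqueEdges A B))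
    (hunion : H.edgeFinset ∪ bicliqueEdges A B = G.edgeFinset) :
    IsBicliquePartition G (insert (A, B) Q) := by
  obtain ⟨hne, hpw, hsup⟩ := isBicliquePartition_iff.1 hQ
  refine isBicliquePartition_iff.2 ⟨?_, ?_, ?_⟩
  · simpa only [forall_mem_insert] using ⟨⟨hA, hB⟩, hne⟩
  · have hsub : ∀ c ∈ Q, bicliqueEdges c.1 c.2 ⊆ H.edgeFinset := fun c hc =>
      hsup ▸ le_sup (f := fun c => bicliqueEdges c.1 c.2) hc
    rw [coe_insert, Set.pairwise_insert]
    exact ⟨hpw, fun c hc _ => ⟨(hdisj.mono_left (hsub c hc)).symm, hdisj.mono_left (hsub c hc)⟩⟩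
  · rw [sup_insert, hsup, sup_eq_union, union_comm, hunion]

lemma IsBicliquePartition.exists_of_deleteIncidenceSet {v : V}
    (hQ : IsBicliquePartition (G.deleteIncidenceSet v) Q) :
    ∃ P, IsBicliquePartition G P ∧ #P ≤ #Q + 1 := by
  have hsub := G.incidenceFinset_subset v
  rcases (G.neighborFinset v).eq_empty_or_nonempty with hN | hN
  · refine ⟨Q, hQ.of_edgeFinset_eq ?_, by omega⟩
    have hinc : G.incidenceFinset v = ∅ := by
      rw [← bicliqueEdges_singleton_neighborFinset, hN, bicliqueEdges, product_empty, image_empty]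
    rw [SimpleGraph.edgeFinset_deleteIncidenceSet_eq_sdiff, hinc, sdiff_empty]
  · refine ⟨_, hQ.insert (singleton_nonempty v) hN ?_ ?_, card_insert_le _ _⟩
    all_goals rw [bicliqueEdges_singleton_neighborFinset,
      SimpleGraph.edgeFinset_deleteIncidenceSet_eq_sdiff]
    · exact sdiff_disjoint
    · exact sdiff_union_of_subset hsub

lemma IsBicliquePartition.exists_of_adj_iff_notMem (T : Finset V)
    (hH : ∀ u w, H.Adj u w ↔ G.Adj u w ∧ u ∉ T ∧ w ∉ T) (hQ : IsBicliquePartition H Q) :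
    ∃ P, IsBicliquePartition G P ∧ #P ≤ #Q + #T := by
  induction T using Finset.induction_on generalizing G with
  | empty =>
    refine ⟨Q, hQ.of_edgeFinset_eq ?_, by simp⟩
    ext e
    induction e using Sym2.ind
    simp [hH]
  | insert v T hvT ih =>
    have hH' : ∀ u w, H.Adj u w ↔ (G.deleteIncidenceSet v).Adj u w ∧ u ∉ T ∧ w ∉ T := by
      intro u w
      rw [hH, SimpleGraph.deleteIncidenceSet_adj]
      simp only [mem_insert, not_or]
      tauto
    obtain ⟨P', hP', hP'card⟩ := ih hH'
    obtain ⟨P, hP, hPcard⟩ := hP'.exists_of_deleteIncidenceSet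
    exact ⟨P, hP, by rw [card_insert_of_notMem hvT]; omega⟩

end BicliquePartition

section CompleteMultipartite

open Function

variable [Fintype V] {ι : Type*} [Fintype ι] [LinearOrder ι] {p : ι → Finset V}

/-- Ordering the parts, the `i`-th part together with all later parts forms a biclique. -/
lemma exists_isBicliquePartition_of_parts (H : SimpleGraph V) [DecidableRel H.Adj]
    (hp : Pairwise (Disjoint on p)) (hH : ∀ u w, H.Adj u w ↔ ∃ i j, i ≠ j ∧ u ∈ p i ∧ w ∈ p j) :
    ∃ Q, IsBicliquePartition H Q ∧ #Q ≤ Fintype.card ι - 1 := by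
  have index_eq {i j : ι} {v : V} (hi : v ∈ p i) (hj : v ∈ p j) : i = j :=
    Set.PairwiseDisjoint.elim_finset (hp.set_pairwise Set.univ) (Set.mem_univ i)
      (Set.mem_univ j) v hi hj
  set tail : ι → Finset V := fun i => ({j | i < j} : Finset ι).biUnion p
  have mem_tail {i : ι} {v : V} : v ∈ tail i ↔ ∃ j, i < j ∧ v ∈ p j := by
    simp [tail]
  have mem_bicliqueEdges_tail {i : ι} {u w : V} :
      s(u, w) ∈ bicliqueEdges (p i) (tail i) ↔
        ∃ j, i < j ∧ (u ∈ p i ∧ w ∈ p j ∨ u ∈ p j ∧ w ∈ p i) := by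
    simp only [mem_bicliqueEdges, mem_tail, Sym2.eq_iff]
    constructor
    · rintro ⟨a, ha, b, ⟨j, hij, hb⟩, ⟨rfl, rfl⟩ | ⟨rfl, rfl⟩⟩
      exacts [⟨j, hij, .inl ⟨ha, hb⟩⟩, ⟨j, hij, .inr ⟨hb, ha⟩⟩]
    · rintro ⟨j, hij, ⟨hu, hw⟩ | ⟨hu, hw⟩⟩
      exacts [⟨u, hu, w, ⟨j, hij, hw⟩, .inl ⟨rfl, rfl⟩⟩, ⟨w, hw, u, ⟨j, hij, hu⟩, .inr ⟨rfl, rfl⟩⟩]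
  set I := univ.filter fun i => (p i).Nonempty ∧ (tail i).Nonempty
  refine ⟨I.image fun i => (p i, tail i), isBicliquePartition_iff.2 ⟨?_, ?_, ?_⟩, ?_⟩
  · simp only [forall_mem_image, I, mem_filter]
    exact fun i hi => hi.2
  · rw [coe_image]
    refine Set.Pairwise.image fun i _ j _ hij => disjoint_left.2 fun e hi hj => ?_
    induction e using Sym2.ind with
    | _ u w =>
    obtain ⟨i', hii', hi⟩ := mem_bicliqueEdges_tail.1 hi
    obtain ⟨j', hjj', hj⟩ := mem_bicliqueEdges_tail.1 hj
    rcases hi with ⟨hu, hw⟩ | ⟨hu, hw⟩ <;> rcases hj with ⟨hu', hw'⟩ | ⟨hu', hw'⟩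
    · exact hij (index_eq hu hu')
    · cases index_eq hu hu'
      cases index_eq hw hw'
      exact lt_asymm hii' hjj'
    · cases index_eq hu hu'
      cases index_eq hw hw'
      exact lt_asymm hii' hjj'
    · exact hij (index_eq hw hw')
  · ext e
    induction e using Sym2.ind with
    | _ u w =>
    simp only [mem_sup, mem_image, SimpleGraph.mem_edgeFinset, SimpleGraph.mem_edgeSet, hH]
    constructor
    · rintro ⟨_, ⟨i, -, rfl⟩, he⟩
      obtain ⟨j, hij, ⟨hu, hw⟩ | ⟨hu, hw⟩⟩ := mem_bicliqueEdges_tail.1 he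
      exacts [⟨i, j, hij.ne, hu, hw⟩, ⟨j, i, hij.ne', hu, hw⟩]
    · rintro ⟨i, j, hij, hu, hw⟩
      rcases hij.lt_or_gt with hij | hji
      · exact ⟨_, ⟨i, mem_filter.2 ⟨mem_univ _, ⟨u, hu⟩, ⟨w, mem_tail.2 ⟨j, hij, hw⟩⟩⟩, rfl⟩,
          mem_bicliqueEdges_tail.2 ⟨j, hij, .inl ⟨hu, hw⟩⟩⟩
      · exact ⟨_, ⟨j, mem_filter.2 ⟨mem_univ _, ⟨w, hw⟩, ⟨u, mem_tail.2 ⟨i, hji, hu⟩⟩⟩, rfl⟩,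
          mem_bicliqueEdges_tail.2 ⟨i, hji, .inr ⟨hu, hw⟩⟩⟩
  · refine card_image_le.trans ?_
    rcases isEmpty_or_nonempty ι with hι | hι
    · simp [I]
    have hmax : univ.max' univ_nonempty ∉ I := fun hm => by
      obtain ⟨-, -, v, hv⟩ := mem_filter.1 hm
      obtain ⟨j, hj, -⟩ := mem_tail.1 hv
      exact (le_max' _ j (mem_univ j)).not_gt hj
    calc #I ≤ #(univ.erase (univ.max' univ_nonempty)) :=
          card_le_card fun i hi => mem_erase.2 ⟨fun h => hmax (h ▸ hi), mem_univ i⟩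
      _ = Fintype.card ι - 1 := by rw [card_erase_of_mem (mem_univ _), card_univ]

end CompleteMultipartite

open Function in
/-- Since `2 |M| = |S|`, the edges of the matching cover `S`; its endpoints are the parts. -/
lemma ComplementHasInducedMatching.exists_parts {G : SimpleGraph V} {l : ℕ}
    (hM : ComplementHasInducedMatching G l) :
    ∃ (S : Finset V) (M : Finset (Sym2 V)), #S = 2 * l ∧ #M = l ∧
      Pairwise (Disjoint on fun e : M => e.1.toFinset) ∧
      ∀ u w, (u ∈ S ∧ w ∈ S ∧ G.Adj u w) ↔
        ∃ e e' : M, e ≠ e' ∧ u ∈ e.1.toFinset ∧ w ∈ e'.1.toFinset := by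
  obtain ⟨S, M, hS, hMl, hMS, hMdisj, hiff⟩ := hM
  have hdisj : (M : Set (Sym2 V)).PairwiseDisjoint Sym2.toFinset := fun e he e' he' hne =>
    disjoint_left.2 fun v hv hv' =>
      hMdisj e he e' he' hne v (Sym2.mem_toFinset.1 hv) (Sym2.mem_toFinset.1 hv')
  have hcard : ∀ e ∈ M, #e.toFinset = 2 := fun e he => by
    refine Sym2.card_toFinset_of_not_isDiag e fun hdiag => ?_
    induction e using Sym2.ind with
    | _ a b =>
    obtain rfl : a = b := Sym2.mk_isDiag_iff.1 hdiag
    have ha := hMS _ he a (Sym2.mem_mk_left a a)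
    exact ((hiff a ha a ha).2 he).1 rfl
  have hcover : M.biUnion Sym2.toFinset = S := by
    refine eq_of_subset_of_card_le (fun v hv => ?_) ?_
    · obtain ⟨e, he, hve⟩ := mem_biUnion.1 hv
      exact hMS e he v (Sym2.mem_toFinset.1 hve)
    · rw [card_biUnion hdisj, sum_congr rfl hcard, sum_const, smul_eq_mul, hS, hMl, mul_comm]
  have mem_S (v : V) : v ∈ S ↔ ∃ e ∈ M, v ∈ e := by
    simp only [← hcover, mem_biUnion, Sym2.mem_toFinset]
  refine ⟨S, M, hS, hMl, fun e e' hne => hdisj e.2 e'.2 (Subtype.coe_injective.ne hne),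
    fun u w => ?_⟩
  simp only [Sym2.mem_toFinset, ne_eq, Subtype.exists, Subtype.mk.injEq]
  constructor
  · rintro ⟨hu, hw, hadj⟩
    obtain ⟨e, he, hue⟩ := (mem_S u).1 hu
    obtain ⟨e', he', hwe'⟩ := (mem_S w).1 hw
    refine ⟨e, he, e', he', fun hee' => ?_, hue, hwe'⟩
    obtain rfl : e = s(u, w) := (Sym2.mem_and_mem_iff hadj.ne).1 ⟨hue, hee' ▸ hwe'⟩
    exact ((hiff u hu w hw).2 he).2 hadj
  · rintro ⟨e, he, e', he', hne, hue, hwe'⟩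
    have hu := hMS e he u hue
    have hw := hMS e' he' w hwe'
    refine ⟨hu, hw, by_contra fun hnadj => hne ?_⟩
    have huw : u ≠ w := by
      rintro rfl
      exact hMdisj e he e' he' hne u hue hwe'
    have hf := (hiff u hu w hw).1 ⟨huw, hnadj⟩
    -- `s(u, w) ∈ M` meets both `e` and `e'`, so it equals both
    have h₁ : s(u, w) = e := by_contra fun h => hMdisj _ hf e he h u (Sym2.mem_mk_left u w) hue
    have h₂ : s(u, w) = e' := by_contra fun h => hMdisj _ hf e' he' h w (Sym2.mem_mk_right u w) hwe'
    exact h₁.symm.trans h₂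

end

theorem bp_le_of_inducedMatching_in_complement {V : Type*} [Fintype V] [DecidableEq V]
    (G : SimpleGraph V) [DecidableRel G.Adj] (l : ℕ) (hl : 1 ≤ l)
    (hM : ComplementHasInducedMatching G l) :
    bp G ≤ Fintype.card V - l - 1 := by
  classical
  obtain ⟨S, M, hS, hMl, hp, hSp⟩ := hM.exists_parts
  let : LinearOrder M := LinearOrder.lift' _ M.equivFin.injective
  let H := ((⊤ : G.Subgraph).induce (S : Set V)).spanningCoe
  have hH (u w : V) : H.Adj u w ↔ u ∈ S ∧ w ∈ S ∧ G.Adj u w := by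
    simp [H]
  obtain ⟨Q, hQ, hQcard⟩ :=
    exists_isBicliquePartition_of_parts H hp fun u w => (hH u w).trans (hSp u w)
  obtain ⟨P, hP, hPcard⟩ := hQ.exists_of_adj_iff_notMem Sᶜ fun u w => by
    simp only [hH, mem_compl, not_not]
    tauto
  have hSV := card_le_univ S
  rw [Fintype.card_coe, hMl] at hQcard
  rw [card_compl, hS] at hPcard
  calc bp G ≤ #P := hP.bp_le_card
    _ ≤ Fintype.card V - l - 1 := by omega
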